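/- arXiv:2007.03463 — 2 statements merged into one kernel-verified Lean document; each statement's English description precedes it below -/
import Mathlib

section
/- For every n-player game p: X = ∏ᵢ₌₁ⁿ Xᵢ → [0,1]ⁿ with compacta Xᵢ and continuous p, every continuous t-norm ∗, every player i, and every capacity νᵢ ∈ MX₋ᵢ, the best response set R*ᵢ(νᵢ) = {x ∈ Xᵢ : P*ᵢ(x, νᵢ) = max{P*ᵢ(z, νᵢ) : z ∈ Xᵢ}} is a nonempty compact subset of Xᵢ. -/
open Set TopologicalSpace

universe u v

/-- A (upper-semicontinuous) capacity on a topological space `X`: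
a normalized monotone set function on the closed subsets, upper semicontinuous
in the sense of Zarichnyi–Nykyforchyn. -/
structure Capacity (X : Type u) [TopologicalSpace X] : Type u where
  toFun : Closeds X → ℝ
  empty' : toFun ⊥ = 0
  univ' : toFun ⊤ = 1
  mono' : ∀ F G : Closeds X, F ≤ G → toFun F ≤ toFun G
  usc' : ∀ (F : Closeds X) (a : ℝ), toFun F < a →
    ∃ O : Set X, IsOpen O ∧ (F : Set X) ⊆ O ∧ ∀ B : Closeds X, (B : Set X) ⊆ O → toFun B < a

namespace Capacity

variable {X : Type u} [TopologicalSpace X]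

/-- Value of a capacity on (the closure of) an arbitrary set; on closed sets this is
the value of the capacity. -/
def cval (ν : Capacity X) (A : Set X) : ℝ := ν.toFun ⟨closure A, isClosed_closure⟩

/-- The sup-extension of a capacity to open sets:
`ν(U) = sup {ν K : K closed, K ⊆ U}`. -/
noncomputable def oval (ν : Capacity X) (U : Set X) : ℝ :=
  sSup {r : ℝ | ∃ K : Closeds X, (K : Set X) ⊆ U ∧ ν.toFun K = r}

end Capacity

/-- The topology on the space `MX` of capacities, generated by the subbase
`O₋(F,a) = {c : c(F) < a}` (`F` closed) and `O₊(U,a) = {c : c(U) > a}` (`U` open). -/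
instance capacityTopology (X : Type u) [TopologicalSpace X] : TopologicalSpace (Capacity X) :=
  TopologicalSpace.generateFrom
    ({S | ∃ (F : Closeds X) (a : ℝ), a ∈ Icc (0:ℝ) 1 ∧
        S = {c : Capacity X | c.toFun F < a}} ∪
     {S | ∃ U : Set X, IsOpen U ∧ ∃ a ∈ Icc (0:ℝ) 1,
        S = {c : Capacity X | a < c.oval U}})

/-- A possibility capacity: `ν(A ∪ B) = max (ν A) (ν B)` on closed sets. -/
def IsPossibility {X : Type u} [TopologicalSpace X] (ν : Capacity X) : Prop :=
  ∀ A B : Closeds X, ν.toFun (A ⊔ B) = max (ν.toFun A) (ν.toFun B)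

/-- A necessity capacity: `ν(A ∩ B) = min (ν A) (ν B)` on closed sets. -/
def IsNecessity {X : Type u} [TopologicalSpace X] (ν : Capacity X) : Prop :=
  ∀ A B : Closeds X, ν.toFun (A ⊓ B) = min (ν.toFun A) (ν.toFun B)

/-- A triangular norm on `[0,1]`. -/
structure Tnorm : Type where
  toFun : ℝ → ℝ → ℝ
  mem' : ∀ s ∈ Icc (0:ℝ) 1, ∀ t ∈ Icc (0:ℝ) 1, toFun s t ∈ Icc (0:ℝ) 1
  comm' : ∀ s ∈ Icc (0:ℝ) 1, ∀ t ∈ Icc (0:ℝ) 1, toFun s t = toFun t s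
  assoc' : ∀ s ∈ Icc (0:ℝ) 1, ∀ t ∈ Icc (0:ℝ) 1, ∀ r ∈ Icc (0:ℝ) 1,
    toFun (toFun s t) r = toFun s (toFun t r)
  mono' : ∀ s₁ ∈ Icc (0:ℝ) 1, ∀ s₂ ∈ Icc (0:ℝ) 1, ∀ t₁ ∈ Icc (0:ℝ) 1, ∀ t₂ ∈ Icc (0:ℝ) 1,
    s₁ ≤ s₂ → t₁ ≤ t₂ → toFun s₁ t₁ ≤ toFun s₂ t₂
  one' : ∀ s ∈ Icc (0:ℝ) 1, toFun s 1 = s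

/-- Continuity of a t-norm (on the unit square). -/
def Tnorm.Cont (star : Tnorm) : Prop :=
  ContinuousOn (fun q : ℝ × ℝ => star.toFun q.1 q.2) (Icc 0 1 ×ˢ Icc 0 1)

/-- The t-normed (fuzzy) integral `∫^{∨∗} f dν = sup { ν(f⁻¹[t,1]) ∗ t : t ∈ [0,1] }`. -/
noncomputable def tInt {X : Type u} [TopologicalSpace X] (star : Tnorm) (ν : Capacity X) (f : X → ℝ) : ℝ :=
  sSup {r : ℝ | ∃ t ∈ Icc (0:ℝ) 1, r = star.toFun (ν.cval (f ⁻¹' Icc t 1)) t}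
/-- Expected payoff of player `i` choosing pure strategy `x`, given belief `ν` about the
opponents' strategy combinations: `P*ᵢ(x, ν) = ∫^{∨∗}_{X₋ᵢ} pᵢ(x, ·) dν`. -/
noncomputable def Pexp {n : ℕ} (X : Fin (n+1) → Type u) [∀ j, TopologicalSpace (X j)]
    (p : (∀ j, X j) → Fin (n+1) → ℝ) (star : Tnorm) (i : Fin (n+1))
    (x : X i) (ν : Capacity (∀ k : Fin n, X (i.succAbove k))) : ℝ :=
  tInt star ν fun y => p (i.insertNth x y) i

/-- The best response set of player `i` given belief `ν`:
`R*ᵢ(ν) = {x : P*ᵢ(x, ν) = max_z P*ᵢ(z, ν)}`. -/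
noncomputable def BestResp {n : ℕ} (X : Fin (n+1) → Type u) [∀ j, TopologicalSpace (X j)]
    (p : (∀ j, X j) → Fin (n+1) → ℝ) (star : Tnorm) (i : Fin (n+1))
    (ν : Capacity (∀ k : Fin n, X (i.succAbove k))) : Set (X i) :=
  {x : X i | Pexp X p star i x ν = sSup (Set.range fun z : X i => Pexp X p star i z ν)}

/-!
The payoff `x ↦ P*ᵢ(x, ν)` is upper semicontinuous on `Xᵢ`: the map `(x, t) ↦ ν {pᵢ(x, ·) ≥ t}`
is upper semicontinuous by the upper semicontinuity of `ν` and the tube lemma, composing with the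
continuous monotone t-norm keeps this, and a supremum over the compact parameter `t ∈ [0,1]` does
too. An upper semicontinuous function on a nonempty compactum attains its maximum, and its set of
maximizers `{x | P*ᵢ(x, ν) ≥ max}` is closed, hence compact.
-/

open Filter Topology Function

theorem UpperSemicontinuous.nonempty_isCompact_setOf_eq_sSup_range {α β : Type*}
    [TopologicalSpace α] [CompactSpace α] [Nonempty α] [ConditionallyCompleteLinearOrder β]
    {f : α → β} (hf : UpperSemicontinuous f) :
    {x | f x = sSup (range f)}.Nonempty ∧ IsCompact {x | f x = sSup (range f)} := by
  obtain ⟨x₀, -, hx₀⟩ := (hf.upperSemicontinuousOn univ).exists_isMaxOn univ_nonempty isCompact_univ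
  have hsup : sSup (range f) = f x₀ :=
    IsGreatest.csSup_eq ⟨⟨x₀, rfl⟩, by rintro _ ⟨x, rfl⟩; exact hx₀ (mem_univ x)⟩
  have hargmax : {x | f x = sSup (range f)} = f ⁻¹' Ici (f x₀) := by
    ext x
    simp only [mem_ofPred_eq, mem_preimage, mem_Ici, hsup]
    exact ⟨ge_of_eq, fun h => le_antisymm (hx₀ (mem_univ x)) h⟩
  exact ⟨⟨x₀, hsup.symm⟩, hargmax ▸ (hf.isClosed_preimage _).isCompact⟩

theorem isOpen_setOf_notMem_Icc_one : IsOpen {q : ℝ × ℝ | q.2 ∉ Icc q.1 1} := by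
  have : {q : ℝ × ℝ | q.2 ∉ Icc q.1 1} = {q | q.2 < q.1} ∪ {q | 1 < q.2} := by
    ext q
    simp only [mem_ofPred_eq, mem_Icc, not_and_or, not_le, mem_union]
  rw [this]
  exact (isOpen_lt continuous_snd continuous_fst).union (isOpen_lt continuous_const continuous_snd)

namespace Capacity

variable {Y : Type v} [TopologicalSpace Y]

theorem cval_mem_Icc (ν : Capacity Y) (A : Set Y) : ν.cval A ∈ Icc (0:ℝ) 1 :=
  ⟨ν.empty' ▸ ν.mono' ⊥ _ bot_le, ν.univ' ▸ ν.mono' _ ⊤ le_top⟩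

theorem cval_of_isClosed (ν : Capacity Y) {A : Set Y} (hA : IsClosed A) :
    ν.cval A = ν.toFun ⟨A, hA⟩ := by
  unfold cval
  congr 1
  exact SetLike.coe_injective hA.closure_eq

/-- The open neighbourhood of `{g z₀ ≥ t}` given by `usc'` has compact complement, so by the tube
lemma it still contains `{g z ≥ s}` for `(z, s)` near `(z₀, t)`. -/
theorem upperSemicontinuous_cval_superlevel [CompactSpace Y] (ν : Capacity Y)
    {Z : Type*} [TopologicalSpace Z] {g : Z → Y → ℝ} (hg : Continuous (uncurry g)) :
    UpperSemicontinuous fun q : Z × ℝ => ν.cval (g q.1 ⁻¹' Icc q.2 1) := by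
  have hclosed (z : Z) (s : ℝ) : IsClosed (g z ⁻¹' Icc s 1) :=
    isClosed_Icc.preimage (hg.uncurry_left z)
  rintro ⟨z₀, t⟩ a ha
  change ν.cval _ < a at ha
  rw [ν.cval_of_isClosed (hclosed z₀ t)] at ha
  obtain ⟨O, hO, hFO, hOB⟩ := ν.usc' _ a ha
  have hout : ∀ᶠ q : Z × ℝ in 𝓝 (z₀, t), ∀ y ∈ Oᶜ, g q.1 y ∉ Icc q.2 1 := by
    refine hO.isClosed_compl.isCompact.eventually_forall_of_forall_eventually fun y hy => ?_
    have hcont : Continuous fun w : (Z × ℝ) × Y => (w.1.2, g w.1.1 w.2) := by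
      fun_prop
    exact (isOpen_setOf_notMem_Icc_one.preimage hcont).mem_nhds fun h => hy (hFO h)
  filter_upwards [hout] with q hq
  change ν.cval _ < a
  rw [ν.cval_of_isClosed (hclosed q.1 q.2)]
  exact hOB _ fun y hy => by_contra fun hyO => hq y hyO hy

end Capacity

theorem Tnorm.upperSemicontinuousWithinAt_comp {star : Tnorm} (hstar : star.Cont)
    {W : Type*} [TopologicalSpace W] {c s : W → ℝ} {S : Set W} {w₀ : W}
    (hc : UpperSemicontinuousAt c w₀) (hc01 : ∀ w, c w ∈ Icc (0:ℝ) 1)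
    (hs : ContinuousAt s w₀) (hs01 : ∀ w ∈ S, s w ∈ Icc (0:ℝ) 1) (hw₀ : w₀ ∈ S) :
    UpperSemicontinuousWithinAt (fun w => star.toFun (c w) (s w)) S w₀ := by
  intro a ha
  obtain ⟨ε, hε, hball⟩ := Metric.mem_nhdsWithin_iff.1
    (hstar (c w₀, s w₀) ⟨hc01 w₀, hs01 w₀ hw₀⟩ (Iio_mem_nhds ha))
  -- `star` is monotone, so it suffices to control it at a point slightly above `c w₀`.
  set x := min (c w₀ + ε / 2) 1
  have hx : x ∈ Icc (0:ℝ) 1 := ⟨le_min (by linarith [(hc01 w₀).1]) zero_le_one, min_le_right _ _⟩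
  have hx_near : dist x (c w₀) < ε := by
    have : c w₀ ≤ x := le_min (by linarith) (hc01 w₀).2
    rw [Real.dist_eq, abs_of_nonneg (by linarith)]
    linarith [min_le_left (c w₀ + ε / 2) 1]
  filter_upwards [nhdsWithin_le_nhds (hc _ (lt_add_of_pos_right (c w₀) (half_pos hε))),
    nhdsWithin_le_nhds (hs (Metric.ball_mem_nhds _ hε)), self_mem_nhdsWithin] with w hcw hsw hw
  calc star.toFun (c w) (s w) ≤ star.toFun x (s w) :=
        star.mono' _ (hc01 w) _ hx _ (hs01 w hw) _ (hs01 w hw) (le_min hcw.le (hc01 w).2) le_rfl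
    _ < a := by
      refine hball (a := (x, s w)) ⟨?_, hx, hs01 w hw⟩
      rw [Metric.mem_ball, Prod.dist_eq]
      exact max_lt hx_near hsw

section tInt

variable {Y : Type v} [TopologicalSpace Y] (star : Tnorm) (ν : Capacity Y)

theorem le_tInt (f : Y → ℝ) {t : ℝ} (ht : t ∈ Icc (0:ℝ) 1) :
    star.toFun (ν.cval (f ⁻¹' Icc t 1)) t ≤ tInt star ν f :=
  le_csSup ⟨1, by rintro _ ⟨s, hs, rfl⟩; exact (star.mem' _ (ν.cval_mem_Icc _) s hs).2⟩ ⟨t, ht, rfl⟩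

theorem tInt_le {f : Y → ℝ} {a : ℝ}
    (h : ∀ t ∈ Icc (0:ℝ) 1, star.toFun (ν.cval (f ⁻¹' Icc t 1)) t ≤ a) : tInt star ν f ≤ a :=
  csSup_le ⟨_, 0, left_mem_Icc.2 zero_le_one, rfl⟩ (by rintro _ ⟨t, ht, rfl⟩; exact h t ht)

end tInt

theorem upperSemicontinuous_tInt {Y : Type v} [TopologicalSpace Y] [CompactSpace Y]
    (ν : Capacity Y) {star : Tnorm} (hstar : star.Cont) {Z : Type*} [TopologicalSpace Z] {g : Z → Y → ℝ} (hg : Continuous (uncurry g)) :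
    UpperSemicontinuous fun z => tInt star ν (g z) := by
  intro z₀ a ha
  obtain ⟨a', hlt, hlt'⟩ := exists_between ha
  have hlocal : ∀ t ∈ Icc (0:ℝ) 1, ∀ᶠ q : Z × ℝ in 𝓝 (z₀, t),
      q.2 ∈ Icc (0:ℝ) 1 → star.toFun (ν.cval (g q.1 ⁻¹' Icc q.2 1)) q.2 < a' := fun t ht =>
    eventually_nhdsWithin_iff.1 <|
      Tnorm.upperSemicontinuousWithinAt_comp (S := {q : Z × ℝ | q.2 ∈ Icc 0 1}) hstar
        (ν.upperSemicontinuous_cval_superlevel hg _) (fun _ => ν.cval_mem_Icc _)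
        continuousAt_snd (fun _ hq => hq) ht a'
        ((le_tInt star ν (g z₀) ht).trans_lt hlt)
  filter_upwards [isCompact_Icc.eventually_forall_of_forall_eventually
    (P := fun z t => t ∈ Icc (0:ℝ) 1 → star.toFun (ν.cval (g z ⁻¹' Icc t 1)) t < a') hlocal]
    with z hz
  exact (tInt_le star ν fun t ht => (hz t ht ht).le).trans_lt hlt'

theorem best_response_nonempty_compact_general {n : ℕ} (X : Fin (n+1) → Type u)
    [∀ j, TopologicalSpace (X j)] [∀ j, CompactSpace (X j)]
    [∀ j, Nonempty (X j)]
    (p : (∀ j, X j) → Fin (n+1) → ℝ) (hp : Continuous p)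
    (star : Tnorm) (hstar : star.Cont) (i : Fin (n+1))
    (ν : Capacity (∀ k : Fin n, X (i.succAbove k))) :
    (BestResp X p star i ν).Nonempty ∧ IsCompact (BestResp X p star i ν) := by
  have hpayoff : Continuous (uncurry fun (x : X i) y => p (i.insertNth x y) i) :=
    (continuous_apply i).comp (hp.comp (continuous_fst.finInsertNth i continuous_snd))
  exact (upperSemicontinuous_tInt ν hstar hpayoff).nonempty_isCompact_setOf_eq_sSup_range

/-- for any `n`-player game with (nonempty) compacta `Xᵢ`, continuous payoff
map into `[0,1]ⁿ`, any continuous t-norm `∗`, any player `i` and any capacity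
`νᵢ ∈ MX₋ᵢ`, the best response set `R*ᵢ(νᵢ)` is a nonempty compact subset of `Xᵢ`. -/
theorem best_response_nonempty_compact {n : ℕ} (X : Fin (n+1) → Type u)
    [∀ j, TopologicalSpace (X j)] [∀ j, CompactSpace (X j)] [∀ j, T2Space (X j)]
    [∀ j, Nonempty (X j)]
    (p : (∀ j, X j) → Fin (n+1) → ℝ) (hp : Continuous p)
    (hp01 : ∀ x j, p x j ∈ Icc (0:ℝ) 1)
    (star : Tnorm) (hstar : star.Cont) (i : Fin (n+1))
    (ν : Capacity (∀ k : Fin n, X (i.succAbove k))) :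
    (BestResp X p star i ν).Nonempty ∧ IsCompact (BestResp X p star i ν) :=
  best_response_nonempty_compact_general X p hp star hstar i ν
end

section
/- For every compactum X, the convexity C_{∪X} on the space M_∪X of possibility capacities is normal: for every two disjoint members C₁, C₂ of C_{∪X} there exist S₁, S₂ ∈ C_{∪X} with S₁ ∪ S₂ = M_∪X, C₁ ∩ S₂ = ∅ and C₂ ∩ S₁ = ∅. -/
/-!
Let `C₁`, `C₂` be disjoint nonempty members of `C_{∪X}`. Being closed and closed under `∨`, each
`Cᵢ` contains its pointwise supremum `σᵢ`; in particular the density `x ↦ ⋁Cᵢ({x})` is upper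
semicontinuous. If `⋁C₁(F) < ⋀C₂(F)` for some closed `F` (or symmetrically), choose `a` in between
and, by upper semicontinuity of `σ₁`, an open `U ⊇ F` with `⋁C₁(cl U) < a`; the half-spaces
`{c : c(U) ≤ a}` and `{c : a ≤ c(cl U)}` of `M_∪X` are members of `C_{∪X}` covering `M_∪X` and
separating `C₁` from `C₂`. Otherwise `⋀Cᵢ ≤ ⋁Cⱼ` everywhere, and the possibility capacity with
density `min (⋁C₁({x})) (⋁C₂({x}))` lies between `⋀Cᵢ` and `⋁Cᵢ` for both `i`, hence in `C₁ ∩ C₂`.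
-/

open Set TopologicalSpace

universe u v

/-- The convexity `C_{∪X}` on the space `M_∪X` of possibility capacities: a set `A` of
possibility capacities belongs to it iff it is empty, or it is nonempty, closed and
equals `[⋀A, ⋁A] ∩ M_∪X` (pointwise order interval between the pointwise infimum and
supremum of `A`). -/
def InConvexU {X : Type u} [TopologicalSpace X] (A : Set (Capacity X)) : Prop :=
  A = ∅ ∨ (A.Nonempty ∧ IsClosed A ∧ (∀ ν ∈ A, IsPossibility ν) ∧
    A = {α : Capacity X | IsPossibility α ∧ ∀ F : Closeds X,
      sInf ((fun ν : Capacity X => ν.toFun F) '' A) ≤ α.toFun F ∧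
      α.toFun F ≤ sSup ((fun ν : Capacity X => ν.toFun F) '' A)})

theorem Real.le_sSup_image {α : Type*} {f : α → ℝ} (hf : BddAbove (range f)) {s : Set α} {x : α}
    (hx : x ∈ s) : f x ≤ sSup (f '' s) :=
  le_csSup (hf.mono (image_subset_range f s)) (mem_image_of_mem f hx)

theorem Real.exists_mem_lt_of_lt_sSup_image {α : Type*} {f : α → ℝ} {s : Set α} {b : ℝ}
    (hb : 0 ≤ b) (h : b < sSup (f '' s)) : ∃ x ∈ s, b < f x := by
  by_contra! H
  exact h.not_ge (Real.sSup_le (forall_mem_image.2 H) hb)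

theorem Real.le_sSup_image_of_forall_lt {α : Type*} {f : α → ℝ} (hf : BddAbove (range f))
    (hf₀ : ∀ x, 0 ≤ f x) {s : Set α} {r : ℝ} (h : ∀ t, 0 ≤ t → t < r → ∃ x ∈ s, t < f x) :
    r ≤ sSup (f '' s) := by
  refine le_of_forall_lt fun t htr => ?_
  rcases lt_or_ge t 0 with ht | ht
  · exact ht.trans_le (Real.sSup_nonneg (forall_mem_image.2 fun x _ => hf₀ x))
  · obtain ⟨x, hx, htx⟩ := h t ht htr
    exact htx.trans_le (Real.le_sSup_image hf hx)

section UscEnvelope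

variable {α : Type*} [TopologicalSpace α] {g : α → ℝ}

noncomputable def uscEnvelope (g : α → ℝ) (x : α) : ℝ :=
  sInf ((fun O => sSup (g '' O)) '' {O | IsOpen O ∧ x ∈ O})

theorem le_uscEnvelope (hg : BddAbove (range g)) (x : α) : g x ≤ uscEnvelope g x :=
  le_csInf (Nonempty.image _ (⟨univ, isOpen_univ, mem_univ x⟩ : {O | IsOpen O ∧ x ∈ O}.Nonempty))
    (forall_mem_image.2 fun _ hO => Real.le_sSup_image hg hO.2)

theorem uscEnvelope_le (hg : BddAbove (range g)) {O : Set α} (hO : IsOpen O) {x : α}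
    (hx : x ∈ O) : uscEnvelope g x ≤ sSup (g '' O) :=
  csInf_le ⟨g x, forall_mem_image.2 fun _ hO => Real.le_sSup_image hg hO.2⟩
    (mem_image_of_mem _ ⟨hO, hx⟩)

theorem upperSemicontinuous_uscEnvelope (hg : BddAbove (range g)) :
    UpperSemicontinuous (uscEnvelope g) := by
  intro x a hx
  obtain ⟨_, ⟨O, ⟨hO, hxO⟩, rfl⟩, hOa⟩ :=
    exists_lt_of_csInf_lt
      (Nonempty.image _ (⟨univ, isOpen_univ, mem_univ x⟩ : {O | IsOpen O ∧ x ∈ O}.Nonempty)) hx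
  filter_upwards [hO.mem_nhds hxO] with y hy
  exact (uscEnvelope_le hg hO hy).trans_lt hOa

end UscEnvelope

namespace Capacity

variable {X : Type u} [TopologicalSpace X]

theorem toFun_nonneg (ν : Capacity X) (F : Closeds X) : 0 ≤ ν.toFun F :=
  ν.empty' ▸ ν.mono' ⊥ F bot_le

theorem toFun_le_one (ν : Capacity X) (F : Closeds X) : ν.toFun F ≤ 1 :=
  ν.univ' ▸ ν.mono' F ⊤ le_top

theorem ext {ν μ : Capacity X} (h : ∀ F, ν.toFun F = μ.toFun F) : ν = μ := by
  cases ν; cases μ; congr; exact funext h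

theorem le_oval (ν : Capacity X) {U : Set X} {K : Closeds X} (h : (K : Set X) ⊆ U) :
    ν.toFun K ≤ ν.oval U :=
  le_csSup ⟨1, by rintro r ⟨K, -, rfl⟩; exact ν.toFun_le_one K⟩ ⟨K, h, rfl⟩

theorem oval_nonneg (ν : Capacity X) (U : Set X) : 0 ≤ ν.oval U :=
  ν.empty' ▸ ν.le_oval (empty_subset U)

theorem oval_le {ν : Capacity X} {U : Set X} {a : ℝ} (ha : 0 ≤ a)
    (h : ∀ K : Closeds X, (K : Set X) ⊆ U → ν.toFun K ≤ a) : ν.oval U ≤ a :=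
  Real.sSup_le (by rintro r ⟨K, hK, rfl⟩; exact h K hK) ha

theorem oval_le_toFun {ν : Capacity X} {U : Set X} {F : Closeds X} (h : U ⊆ F) :
    ν.oval U ≤ ν.toFun F :=
  oval_le (ν.toFun_nonneg F) fun K hK => ν.mono' K F (hK.trans h)

theorem exists_lt_toFun_of_lt_oval {ν : Capacity X} {U : Set X} {a : ℝ} (h : a < ν.oval U) :
    ∃ K : Closeds X, (K : Set X) ⊆ U ∧ a < ν.toFun K := by
  have hne : {r : ℝ | ∃ K : Closeds X, (K : Set X) ⊆ U ∧ ν.toFun K = r}.Nonempty :=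
    ⟨_, ⊥, empty_subset U, rfl⟩
  obtain ⟨r, ⟨K, hK, rfl⟩, hr⟩ := exists_lt_of_lt_csSup hne h
  exact ⟨K, hK, hr⟩

theorem isOpen_setOf_toFun_lt (F : Closeds X) {a : ℝ} (ha : a ∈ Icc (0 : ℝ) 1) :
    IsOpen {c : Capacity X | c.toFun F < a} :=
  .basic _ (.inl ⟨F, a, ha, rfl⟩)

theorem isOpen_setOf_lt_oval {U : Set X} (hU : IsOpen U) {a : ℝ} (ha : a ∈ Icc (0 : ℝ) 1) :
    IsOpen {c : Capacity X | a < c.oval U} :=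
  .basic _ (.inr ⟨U, hU, a, ha, rfl⟩)

instance : PartialOrder (Capacity X) where
  le ν μ := ∀ F, ν.toFun F ≤ μ.toFun F
  le_refl _ _ := le_rfl
  le_trans _ _ _ h₁ h₂ F := (h₁ F).trans (h₂ F)
  le_antisymm _ _ h₁ h₂ := ext fun F => (h₁ F).antisymm (h₂ F)

theorem oval_mono {ν μ : Capacity X} (h : ν ≤ μ) (U : Set X) : ν.oval U ≤ μ.oval U :=
  oval_le (μ.oval_nonneg U) fun _ hK => (h _).trans (μ.le_oval hK)

instance : SemilatticeSup (Capacity X) where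
  sup ν μ :=
    { toFun F := max (ν.toFun F) (μ.toFun F)
      empty' := by simp [ν.empty', μ.empty']
      univ' := by simp [ν.univ', μ.univ']
      mono' F G h := max_le_max (ν.mono' F G h) (μ.mono' F G h)
      usc' F a h := by
        obtain ⟨O₁, hO₁, hF₁, h₁⟩ := ν.usc' F a ((le_max_left _ _).trans_lt h)
        obtain ⟨O₂, hO₂, hF₂, h₂⟩ := μ.usc' F a ((le_max_right _ _).trans_lt h)
        exact ⟨O₁ ∩ O₂, hO₁.inter hO₂, subset_inter hF₁ hF₂, fun B hB =>
          max_lt (h₁ B (hB.trans inter_subset_left)) (h₂ B (hB.trans inter_subset_right))⟩ }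
  le_sup_left _ _ _ := le_max_left _ _
  le_sup_right _ _ _ := le_max_right _ _
  sup_le _ _ _ h₁ h₂ F := max_le (h₁ F) (h₂ F)

@[simp]
theorem sup_toFun (ν μ : Capacity X) (F : Closeds X) :
    (ν ⊔ μ).toFun F = max (ν.toFun F) (μ.toFun F) := rfl

section Density

variable [T1Space X]

def density (ν : Capacity X) (x : X) : ℝ := ν.toFun {x}

theorem density_le_toFun (ν : Capacity X) {x : X} {F : Closeds X} (hx : x ∈ F) :
    ν.density x ≤ ν.toFun F :=
  ν.mono' _ _ (Set.singleton_subset_iff.2 hx)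

theorem upperSemicontinuous_density (ν : Capacity X) : UpperSemicontinuous ν.density := by
  intro x a hx
  obtain ⟨O, hO, hxO, hB⟩ := ν.usc' {x} a hx
  filter_upwards [hO.mem_nhds (hxO rfl)] with y hy
  exact hB {y} (Set.singleton_subset_iff.2 hy)

end Density

noncomputable def ofDensity (f : X → ℝ) (hf₀ : ∀ x, 0 ≤ f x) (hf₁ : ∀ x, f x ≤ 1)
    (hf : UpperSemicontinuous f) (hsup : ⨆ x, f x = 1) : Capacity X where
  toFun F := sSup (f '' F)
  empty' := by simp
  univ' := by simpa [sSup_range] using hsup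
  mono' F G h := Real.sSup_le (forall_mem_image.2 fun x hx =>
      Real.le_sSup_image ⟨1, forall_mem_range.2 hf₁⟩ (h hx))
    (Real.sSup_nonneg (forall_mem_image.2 fun x _ => hf₀ x))
  usc' F a h := by
    obtain ⟨b, hFb, hba⟩ := exists_between h
    have hb : 0 ≤ b := (Real.sSup_nonneg (forall_mem_image.2 fun x _ => hf₀ x)).trans hFb.le
    refine ⟨f ⁻¹' Iio b, hf.isOpen_preimage b, fun x hx => ?_, fun B hB => ?_⟩
    · exact (Real.le_sSup_image ⟨1, forall_mem_range.2 hf₁⟩ hx).trans_lt hFb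
    · exact (Real.sSup_le (forall_mem_image.2 fun x hx => (hB hx).le) hb).trans_lt hba

section OfDensity

variable {f : X → ℝ} {hf₀ : ∀ x, 0 ≤ f x} {hf₁ : ∀ x, f x ≤ 1} {hf : UpperSemicontinuous f}
  {hsup : ⨆ x, f x = 1}

@[simp]
theorem ofDensity_toFun (F : Closeds X) :
    (ofDensity f hf₀ hf₁ hf hsup).toFun F = sSup (f '' F) := rfl

theorem isPossibility_ofDensity : IsPossibility (ofDensity f hf₀ hf₁ hf hsup) := by
  have hbdd : BddAbove (range f) := ⟨1, forall_mem_range.2 hf₁⟩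
  have hnonneg (s : Set X) : 0 ≤ sSup (f '' s) :=
    Real.sSup_nonneg (forall_mem_image.2 fun x _ => hf₀ x)
  intro A B
  simp only [ofDensity_toFun, Closeds.coe_sup]
  refine le_antisymm (Real.sSup_le (forall_mem_image.2 fun x hx => ?_)
    ((hnonneg _).trans (le_max_left _ _))) (max_le ?_ ?_)
  · rcases hx with hx | hx
    · exact (Real.le_sSup_image hbdd hx).trans (le_max_left _ _)
    · exact (Real.le_sSup_image hbdd hx).trans (le_max_right _ _)
  · exact Real.sSup_le (forall_mem_image.2 fun x hx => Real.le_sSup_image hbdd (.inl hx))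
      (hnonneg _)
  · exact Real.sSup_le (forall_mem_image.2 fun x hx => Real.le_sSup_image hbdd (.inr hx))
      (hnonneg _)

end OfDensity

end Capacity

namespace IsPossibility

open Capacity

variable {X : Type u} [TopologicalSpace X]

theorem sup {ν μ : Capacity X} (hν : IsPossibility ν) (hμ : IsPossibility μ) :
    IsPossibility (ν ⊔ μ) := by
  intro A B
  simp only [Capacity.sup_toFun, hν A B, hμ A B, max_max_max_comm]

variable [T2Space X] [CompactSpace X] {μ : Capacity X}

theorem oval_union_le (hμ : IsPossibility μ) {U V : Set X} (hU : IsOpen U) (hV : IsOpen V) :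
    μ.oval (U ∪ V) ≤ max (μ.oval U) (μ.oval V) := by
  refine oval_le ((μ.oval_nonneg U).trans (le_max_left _ _)) fun K hK => ?_
  obtain ⟨K₁, K₂, hK₁, hK₂, hK₁U, hK₂V, hK⟩ :=
    K.isClosed.isCompact.binary_compact_cover hU hV hK
  have hsplit : K = ⟨K₁, hK₁.isClosed⟩ ⊔ ⟨K₂, hK₂.isClosed⟩ := Closeds.ext hK
  rw [hsplit, hμ]
  exact max_le_max (μ.le_oval hK₁U) (μ.le_oval hK₂V)

/-- By compactness of `F`, the open sets on which `μ` stays below a bound, supplied around each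
point of `F` by upper semicontinuity, combine into one through `oval_union_le`. -/
theorem toFun_le_of_forall_density_le (hμ : IsPossibility μ) {F : Closeds X} {t : ℝ}
    (ht : 0 ≤ t) (h : ∀ x ∈ F, μ.density x ≤ t) : μ.toFun F ≤ t := by
  refine le_of_forall_gt fun s hts => ?_
  obtain ⟨O, -, hFO, hOs⟩ : ∃ O, IsOpen O ∧ (F : Set X) ⊆ O ∧ μ.oval O < s := by
    refine F.isClosed.isCompact.induction_on ?_ ?_ ?_ ?_
    · refine ⟨∅, isOpen_empty, subset_rfl, (oval_le ht fun K hK => ?_).trans_lt hts⟩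
      exact (μ.mono' K ⊥ hK).trans (μ.empty'.trans_le ht)
    · rintro S T hST ⟨O, hO, hTO, hOs⟩
      exact ⟨O, hO, hST.trans hTO, hOs⟩
    · rintro S T ⟨O, hO, hSO, hOs⟩ ⟨O', hO', hTO', hO's⟩
      exact ⟨O ∪ O', hO.union hO', union_subset_union hSO hTO',
        (hμ.oval_union_le hO hO').trans_lt (max_lt hOs hO's)⟩
    · intro x hx
      obtain ⟨r, hxr, hrs⟩ := exists_between ((h x hx).trans_lt hts)
      obtain ⟨O, hO, hxO, hOr⟩ := μ.usc' {x} r hxr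
      exact ⟨O, mem_nhdsWithin_of_mem_nhds (hO.mem_nhds (hxO rfl)), O, hO, subset_rfl,
        (oval_le ((μ.toFun_nonneg _).trans hxr.le) fun K hK => (hOr K hK).le).trans_lt hrs⟩
  exact (μ.le_oval hFO).trans_lt hOs

theorem exists_lt_density (hμ : IsPossibility μ) {F : Closeds X} {t : ℝ} (ht : 0 ≤ t)
    (h : t < μ.toFun F) : ∃ x ∈ F, t < μ.density x := by
  by_contra! H
  exact h.not_ge (hμ.toFun_le_of_forall_density_le ht H)

end IsPossibility

namespace Capacity

open Filter

variable {X : Type u} [TopologicalSpace X] {C : Set (Capacity X)} {ν μ σ : Capacity X}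

noncomputable def supVal (C : Set (Capacity X)) (F : Closeds X) : ℝ :=
  sSup ((fun ν : Capacity X => ν.toFun F) '' C)

noncomputable def infVal (C : Set (Capacity X)) (F : Closeds X) : ℝ :=
  sInf ((fun ν : Capacity X => ν.toFun F) '' C)

/-- The order interval `[⋀C, ⋁C] ∩ M_∪X`; `InConvexU` asks a nonempty closed `C` to equal it. -/
def possInterval (C : Set (Capacity X)) : Set (Capacity X) :=
  {α | IsPossibility α ∧ ∀ F, infVal C F ≤ α.toFun F ∧ α.toFun F ≤ supVal C F}

theorem le_supVal (hν : ν ∈ C) (F : Closeds X) : ν.toFun F ≤ supVal C F :=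
  le_csSup ⟨1, forall_mem_image.2 fun ν _ => ν.toFun_le_one F⟩ (mem_image_of_mem _ hν)

theorem infVal_le (hν : ν ∈ C) (F : Closeds X) : infVal C F ≤ ν.toFun F :=
  csInf_le ⟨0, forall_mem_image.2 fun ν _ => ν.toFun_nonneg F⟩ (mem_image_of_mem _ hν)

theorem supVal_nonneg (C : Set (Capacity X)) (F : Closeds X) : 0 ≤ supVal C F :=
  Real.sSup_nonneg (forall_mem_image.2 fun ν _ => ν.toFun_nonneg F)

theorem supVal_le {F : Closeds X} {a : ℝ} (ha : 0 ≤ a) (h : ∀ ν ∈ C, ν.toFun F ≤ a) :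
    supVal C F ≤ a :=
  Real.sSup_le (forall_mem_image.2 h) ha

theorem le_infVal (hne : C.Nonempty) {F : Closeds X} {a : ℝ} (h : ∀ ν ∈ C, a ≤ ν.toFun F) :
    a ≤ infVal C F :=
  le_csInf (hne.image _) (forall_mem_image.2 h)

theorem infVal_top (hne : C.Nonempty) : infVal C ⊤ = 1 := by
  obtain ⟨ν, hν⟩ := hne
  exact ((infVal_le hν ⊤).trans_eq ν.univ').antisymm
    (le_infVal ⟨ν, hν⟩ fun μ _ => μ.univ'.ge)

theorem supVal_eq_of_isGreatest (h : IsGreatest C σ) (F : Closeds X) : supVal C F = σ.toFun F :=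
  (supVal_le (σ.toFun_nonneg F) fun _ hν => h.2 hν F).antisymm (le_supVal h.1 F)

theorem subset_possInterval (hposs : ∀ ν ∈ C, IsPossibility ν) : C ⊆ possInterval C :=
  fun ν hν => ⟨hposs ν hν, fun F => ⟨infVal_le hν F, le_supVal hν F⟩⟩

theorem sup_mem (hposs : ∀ ν ∈ C, IsPossibility ν) (hint : possInterval C ⊆ C) (hν : ν ∈ C)
    (hμ : μ ∈ C) : ν ⊔ μ ∈ C :=
  hint ⟨(hposs ν hν).sup (hposs μ hμ), fun F =>
    ⟨(infVal_le hν F).trans (le_max_left _ _), max_le (le_supVal hν F) (le_supVal hμ F)⟩⟩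

theorem inConvexU_of_possInterval_subset (hne : C.Nonempty) (hcl : IsClosed C)
    (hposs : ∀ ν ∈ C, IsPossibility ν) (hint : possInterval C ⊆ C) : InConvexU C :=
  .inr ⟨hne, hcl, hposs, (subset_possInterval hposs).antisymm hint⟩

/-- The members of `C` form a net, directed by `⊔`, that converges to `σ`: the subbasic sets
`{c | c F < a}` contain all of `C` since `σ` bounds `C`, and the sets `{c | b < c.oval U}` contain
all members above a single one. -/
theorem mem_closure_of_forall_lt_oval (hne : C.Nonempty)
    (hsup : ∀ ν ∈ C, ∀ μ ∈ C, ν ⊔ μ ∈ C) (hσ : σ ∈ upperBounds C)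
    (hoval : ∀ U, IsOpen U → ∀ b, b < σ.oval U → ∃ ν ∈ C, b < ν.oval U) : σ ∈ closure C := by
  have : Nonempty C := hne.to_subtype
  have : IsDirected C (· ≤ ·) :=
    ⟨fun ν μ => ⟨⟨ν ⊔ μ, hsup ν ν.2 μ μ.2⟩, le_sup_left (b := μ.1), le_sup_right (a := ν.1)⟩⟩
  refine mem_closure_of_tendsto (f := ((↑) : C → Capacity X)) (b := atTop) ?_
    (Eventually.of_forall fun ν => ν.2)
  refine TopologicalSpace.tendsto_nhds_generateFrom_iff.2 ?_
  rintro s (⟨F, a, -, rfl⟩ | ⟨U, hU, b, -, rfl⟩) hσs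
  · exact Eventually.of_forall fun ν => (hσ ν.2 F).trans_lt hσs
  · obtain ⟨ν₀, hν₀, hb⟩ := hoval U hU b hσs
    filter_upwards [eventually_ge_atTop ⟨ν₀, hν₀⟩] with ν hν
    exact hb.trans_le (oval_mono hν U)

section Density

variable [T1Space X]

noncomputable def supDensity (C : Set (Capacity X)) (x : X) : ℝ := supVal C {x}

theorem density_le_supDensity (hν : ν ∈ C) (x : X) : ν.density x ≤ supDensity C x :=
  le_supVal hν _

theorem supDensity_nonneg (C : Set (Capacity X)) (x : X) : 0 ≤ supDensity C x :=
  supVal_nonneg C _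

theorem supDensity_le_one (C : Set (Capacity X)) (x : X) : supDensity C x ≤ 1 :=
  supVal_le zero_le_one fun ν _ => ν.toFun_le_one _

theorem supDensity_le_supVal {x : X} {F : Closeds X} (hx : x ∈ F) :
    supDensity C x ≤ supVal C F :=
  supVal_le (supVal_nonneg C F) fun _ hν => (density_le_toFun _ hx).trans (le_supVal hν F)

theorem upperSemicontinuous_supDensity_of_isGreatest (h : IsGreatest C σ) :
    UpperSemicontinuous (supDensity C) := by
  have : supDensity C = σ.density := funext fun x => supVal_eq_of_isGreatest h {x}
  exact this ▸ σ.upperSemicontinuous_density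

end Density

variable [T2Space X] [CompactSpace X]

theorem isClosed_setOf_isPossibility : IsClosed {ν : Capacity X | IsPossibility ν} := by
  refine isOpen_compl_iff.1 (isOpen_iff_forall_mem_open.2 fun ν hν => ?_)
  obtain ⟨A, B, hAB⟩ : ∃ A B : Closeds X, max (ν.toFun A) (ν.toFun B) < ν.toFun (A ⊔ B) := by
    obtain ⟨A, B, hne⟩ : ∃ A B : Closeds X, ν.toFun (A ⊔ B) ≠ max (ν.toFun A) (ν.toFun B) := by
      simpa [IsPossibility] using hν
    exact ⟨A, B, (max_le (ν.mono' _ _ le_sup_left) (ν.mono' _ _ le_sup_right)).lt_of_ne' hne⟩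
  obtain ⟨a, hma, hav⟩ := exists_between hAB
  have ha : a ∈ Icc (0 : ℝ) 1 :=
    ⟨((ν.toFun_nonneg A).trans (le_max_left _ _)).trans hma.le, hav.le.trans (ν.toFun_le_one _)⟩
  obtain ⟨OA, hOA, hAOA, hOAa⟩ := ν.usc' A a ((le_max_left _ _).trans_lt hma)
  obtain ⟨OB, hOB, hBOB, hOBa⟩ := ν.usc' B a ((le_max_right _ _).trans_lt hma)
  obtain ⟨UA, hUA, hAUA, hUAOA⟩ := normal_exists_closure_subset A.isClosed hOA hAOA
  obtain ⟨UB, hUB, hBUB, hUBOB⟩ := normal_exists_closure_subset B.isClosed hOB hBOB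
  -- A possibility capacity small on `closure UA` and on `closure UB` is small on `UA ∪ UB`.
  refine ⟨{c | c.toFun (Closeds.closure UA) < a} ∩ {c | c.toFun (Closeds.closure UB) < a} ∩
    {c | a < c.oval (UA ∪ UB)}, ?_, ?_, ?_⟩
  · rintro μ ⟨⟨hμA, hμB⟩, hμU⟩ hμ
    have := (hμ.oval_union_le hUA hUB).trans
      (max_le_max (oval_le_toFun (F := Closeds.closure UA) subset_closure)
        (oval_le_toFun (F := Closeds.closure UB) subset_closure))
    exact (hμU.trans_le this).not_ge (max_le hμA.le hμB.le)
  · exact ((isOpen_setOf_toFun_lt _ ha).inter (isOpen_setOf_toFun_lt _ ha)).inter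
      (isOpen_setOf_lt_oval (hUA.union hUB) ha)
  · refine ⟨⟨hOAa _ hUAOA, hOBa _ hUBOB⟩, hav.trans_le (ν.le_oval ?_)⟩
    rw [Closeds.coe_sup]
    exact union_subset_union hAUA hBUB

/-- The greatest element is the possibility capacity whose density is the upper semicontinuous
envelope of `supDensity C`; it lies in `C` because `C` is closed and directed. -/
theorem exists_isGreatest (hne : C.Nonempty) (hcl : IsClosed C)
    (hposs : ∀ ν ∈ C, IsPossibility ν) (hint : possInterval C ⊆ C) : ∃ σ, IsGreatest C σ := by
  have hg : BddAbove (range (supDensity C)) := ⟨1, forall_mem_range.2 (supDensity_le_one C)⟩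
  set h := uscEnvelope (supDensity C)
  have hh₀ (x : X) : 0 ≤ h x := (supDensity_nonneg C x).trans (le_uscEnvelope hg x)
  have hh₁ (x : X) : h x ≤ 1 := (uscEnvelope_le hg isOpen_univ (mem_univ x)).trans
    (Real.sSup_le (forall_mem_image.2 fun y _ => supDensity_le_one C y) zero_le_one)
  have hle (ν : Capacity X) (hν : ν ∈ C) (F : Closeds X) : ν.toFun F ≤ sSup (h '' F) :=
    (hposs ν hν).toFun_le_of_forall_density_le
      (Real.sSup_nonneg (forall_mem_image.2 fun x _ => hh₀ x)) fun x hx =>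
      (density_le_supDensity hν x).trans ((le_uscEnvelope hg x).trans
        (Real.le_sSup_image ⟨1, forall_mem_range.2 hh₁⟩ hx))
  have hsup : ⨆ x, h x = 1 := by
    obtain ⟨ν, hν⟩ := hne
    refine (Real.iSup_le hh₁ zero_le_one).antisymm ?_
    simpa [ν.univ', sSup_range] using hle ν hν ⊤
  set σ := ofDensity h hh₀ hh₁ (upperSemicontinuous_uscEnvelope hg) hsup
  have hσ : σ ∈ upperBounds C := fun ν hν => hle ν hν
  refine ⟨σ, hcl.closure_subset (mem_closure_of_forall_lt_oval hne
    (fun ν hν μ hμ => sup_mem hposs hint hν hμ) hσ fun U hU b hb => ?_), hσ⟩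
  rcases lt_or_ge b 0 with hb₀ | hb₀
  · exact hne.imp fun ν hν => ⟨hν, hb₀.trans_le (ν.oval_nonneg U)⟩
  obtain ⟨K, hKU, hbK⟩ := exists_lt_toFun_of_lt_oval hb
  obtain ⟨x, hxK, hbx⟩ := Real.exists_mem_lt_of_lt_sSup_image hb₀ hbK
  obtain ⟨y, hyU, hby⟩ := Real.exists_mem_lt_of_lt_sSup_image hb₀
    (hbx.trans_le (uscEnvelope_le hg hU (hKU hxK)))
  obtain ⟨ν, hν, hbν⟩ := Real.exists_mem_lt_of_lt_sSup_image hb₀ hby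
  exact ⟨ν, hν, hbν.trans_le (ν.le_oval (Set.singleton_subset_iff.2 hyU))⟩

variable {C' C₁ C₂ : Set (Capacity X)} {σ₁ σ₂ : Capacity X}

theorem inConvexU_setOf_isPossibility : InConvexU {ν : Capacity X | IsPossibility ν} := by
  rcases eq_empty_or_nonempty {ν : Capacity X | IsPossibility ν} with h | h
  · exact .inl h
  · exact inConvexU_of_possInterval_subset h isClosed_setOf_isPossibility (fun _ hν => hν)
      fun _ hα => hα.1

theorem inConvexU_setOf_oval_le {U : Set X} (hU : IsOpen U) {a : ℝ} (ha : a ∈ Icc (0 : ℝ) 1)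
    (hne : {c : Capacity X | IsPossibility c ∧ c.oval U ≤ a}.Nonempty) :
    InConvexU {c : Capacity X | IsPossibility c ∧ c.oval U ≤ a} := by
  have hcl : IsClosed {c : Capacity X | c.oval U ≤ a} := by
    simpa only [compl_ofPred, not_lt] using (isOpen_setOf_lt_oval hU ha).isClosed_compl
  refine inConvexU_of_possInterval_subset hne (isClosed_setOf_isPossibility.inter hcl)
    (fun _ hν => hν.1) fun α hα => ⟨hα.1, oval_le ha.1 fun K hK => ?_⟩
  exact (hα.2 K).2.trans (supVal_le ha.1 fun ν hν => (ν.le_oval hK).trans hν.2)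

theorem inConvexU_setOf_le_toFun (F : Closeds X) {a : ℝ} (ha : a ∈ Icc (0 : ℝ) 1)
    (hne : {c : Capacity X | IsPossibility c ∧ a ≤ c.toFun F}.Nonempty) :
    InConvexU {c : Capacity X | IsPossibility c ∧ a ≤ c.toFun F} := by
  have hcl : IsClosed {c : Capacity X | a ≤ c.toFun F} := by
    simpa only [compl_ofPred, not_lt] using (isOpen_setOf_toFun_lt F ha).isClosed_compl
  exact inConvexU_of_possInterval_subset hne (isClosed_setOf_isPossibility.inter hcl)
    (fun _ hν => hν.1) fun α hα => ⟨hα.1, (le_infVal hne fun _ hν => hν.2).trans (hα.2 F).1⟩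

theorem exists_separation_of_supVal_lt_infVal (hσ : IsGreatest C₁ σ)
    (h1poss : ∀ ν ∈ C₁, IsPossibility ν) (h2ne : C₂.Nonempty) (h2poss : ∀ ν ∈ C₂, IsPossibility ν)
    {F₀ : Closeds X} (hF₀ : supVal C₁ F₀ < infVal C₂ F₀) :
    ∃ S₁ S₂ : Set (Capacity X), InConvexU S₁ ∧ InConvexU S₂ ∧
      S₁ ∪ S₂ = {ν : Capacity X | IsPossibility ν} ∧ C₁ ∩ S₂ = ∅ ∧ C₂ ∩ S₁ = ∅ := by
  obtain ⟨a, h1a, ha2⟩ := exists_between hF₀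
  rw [supVal_eq_of_isGreatest hσ] at h1a
  have ha : a ∈ Icc (0 : ℝ) 1 := ⟨(σ.toFun_nonneg F₀).trans h1a.le,
    h2ne.elim fun ν hν => ha2.le.trans ((infVal_le hν F₀).trans (ν.toFun_le_one F₀))⟩
  obtain ⟨O, hO, hF₀O, hOa⟩ := σ.usc' F₀ a h1a
  obtain ⟨U, hU, hF₀U, hUO⟩ := normal_exists_closure_subset F₀.isClosed hO hF₀O
  have hC₁ (ν : Capacity X) (hν : ν ∈ C₁) : ν.toFun (Closeds.closure U) < a :=
    (hσ.2 hν _).trans_lt (hOa _ hUO)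
  have hC₂ (ν : Capacity X) (hν : ν ∈ C₂) : a < ν.oval U :=
    ha2.trans_le ((infVal_le hν F₀).trans (ν.le_oval hF₀U))
  have hoval (ν : Capacity X) : ν.oval U ≤ ν.toFun (Closeds.closure U) :=
    oval_le_toFun subset_closure
  refine ⟨{c | IsPossibility c ∧ c.oval U ≤ a},
    {c | IsPossibility c ∧ a ≤ c.toFun (Closeds.closure U)},
    inConvexU_setOf_oval_le hU ha ⟨σ, h1poss σ hσ.1, (hoval σ).trans (hC₁ σ hσ.1).le⟩,
    inConvexU_setOf_le_toFun _ ha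
      (h2ne.imp fun ν hν => ⟨h2poss ν hν, (hC₂ ν hν).le.trans (hoval ν)⟩), ?_, ?_, ?_⟩
  · refine (union_subset (fun _ hc => hc.1) fun _ hc => hc.1).antisymm fun c hc => ?_
    rcases le_or_gt a (c.toFun (Closeds.closure U)) with h | h
    · exact .inr ⟨hc, h⟩
    · exact .inl ⟨hc, (hoval c).trans h.le⟩
  · exact eq_empty_iff_forall_notMem.2 fun ν hν => (hC₁ ν hν.1).not_ge hν.2.2
  · exact eq_empty_iff_forall_notMem.2 fun ν hν => (hC₂ ν hν.1).not_ge hν.2.2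

/-- The level set `F ∩ {supDensity C' ≥ t'}` is closed and every member of `C'` is larger than `t'`
on it, so comparing `⋀C'` with `⋁C` there produces the required point. -/
theorem exists_lt_supDensity_of_lt_infVal (hposs : ∀ ν ∈ C, IsPossibility ν)
    (hposs' : ∀ ν ∈ C', IsPossibility ν) (hne' : C'.Nonempty)
    (husc' : UpperSemicontinuous (supDensity C')) (hle : ∀ K, infVal C' K ≤ supVal C K)
    {F : Closeds X} {t : ℝ} (ht : 0 ≤ t) (htF : t < infVal C' F) :
    ∃ x ∈ F, t < supDensity C x ∧ t < supDensity C' x := by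
  obtain ⟨t', htt', ht'F⟩ := exists_between htF
  let K : Closeds X := ⟨F ∩ supDensity C' ⁻¹' Ici t', F.isClosed.inter (husc'.isClosed_preimage t')⟩
  have hK : t' ≤ infVal C' K := le_infVal hne' fun ν hν => by
    obtain ⟨x, hxF, hx⟩ := (hposs' ν hν).exists_lt_density (ht.trans htt'.le)
      (ht'F.trans_le (infVal_le hν F))
    exact hx.le.trans (density_le_toFun ν ⟨hxF, hx.le.trans (density_le_supDensity hν x)⟩)
  obtain ⟨ν, hν, htν⟩ := Real.exists_mem_lt_of_lt_sSup_image ht (htt'.trans_le (hK.trans (hle K)))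
  obtain ⟨x, ⟨hxF, hxK⟩, htx⟩ := (hposs ν hν).exists_lt_density ht htν
  exact ⟨x, hxF, htx.trans_le (density_le_supDensity hν x), htt'.trans_le hxK⟩

theorem inter_nonempty_of_forall_infVal_le_supVal (hσ₁ : IsGreatest C₁ σ₁) (hσ₂ : IsGreatest C₂ σ₂)
    (h1poss : ∀ ν ∈ C₁, IsPossibility ν) (h1int : possInterval C₁ ⊆ C₁)
    (h2poss : ∀ ν ∈ C₂, IsPossibility ν) (h2int : possInterval C₂ ⊆ C₂)
    (h₁₂ : ∀ K, infVal C₁ K ≤ supVal C₂ K) (h₂₁ : ∀ K, infVal C₂ K ≤ supVal C₁ K) :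
    (C₁ ∩ C₂).Nonempty := by
  set f := fun x => min (supDensity C₁ x) (supDensity C₂ x)
  have hf₀ (x : X) : 0 ≤ f x := le_min (supDensity_nonneg _ x) (supDensity_nonneg _ x)
  have hf₁ (x : X) : f x ≤ 1 := (min_le_left _ _).trans (supDensity_le_one _ x)
  have hbdd : BddAbove (range f) := ⟨1, forall_mem_range.2 hf₁⟩
  have husc₁ := upperSemicontinuous_supDensity_of_isGreatest hσ₁
  have husc₂ := upperSemicontinuous_supDensity_of_isGreatest hσ₂
  have hlow₁ (F : Closeds X) : infVal C₁ F ≤ sSup (f '' F) :=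
    Real.le_sSup_image_of_forall_lt hbdd hf₀ fun t ht htF =>
      (exists_lt_supDensity_of_lt_infVal h2poss h1poss ⟨σ₁, hσ₁.1⟩ husc₁ h₁₂ ht htF).imp
        fun _ ⟨hx, h₂, h₁⟩ => ⟨hx, lt_min h₁ h₂⟩
  have hlow₂ (F : Closeds X) : infVal C₂ F ≤ sSup (f '' F) :=
    Real.le_sSup_image_of_forall_lt hbdd hf₀ fun t ht htF =>
      (exists_lt_supDensity_of_lt_infVal h1poss h2poss ⟨σ₂, hσ₂.1⟩ husc₂ h₂₁ ht htF).imp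
        fun _ ⟨hx, h₁, h₂⟩ => ⟨hx, lt_min h₁ h₂⟩
  have hsup : ⨆ x, f x = 1 := by
    refine (Real.iSup_le hf₁ zero_le_one).antisymm ?_
    simpa [infVal_top ⟨σ₂, hσ₂.1⟩, sSup_range] using hlow₂ ⊤
  set α := ofDensity f hf₀ hf₁ (husc₁.inf husc₂) hsup
  have hup (C : Set (Capacity X)) (hf : ∀ x, f x ≤ supDensity C x) (F : Closeds X) :
      α.toFun F ≤ supVal C F :=
    Real.sSup_le (forall_mem_image.2 fun _ hx => (hf _).trans (supDensity_le_supVal hx))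
      (supVal_nonneg C F)
  exact ⟨α,
    h1int ⟨isPossibility_ofDensity, fun F => ⟨hlow₁ F, hup C₁ (fun _ => min_le_left _ _) F⟩⟩,
    h2int ⟨isPossibility_ofDensity, fun F => ⟨hlow₂ F, hup C₂ (fun _ => min_le_right _ _) F⟩⟩⟩

end Capacity

open Capacity in
/-- the convexity `C_{∪X}` on `M_∪X` is normal: disjoint members can be
separated by two members covering `M_∪X`. -/
theorem convexity_on_possibility_capacities_normal (X : Type u) [TopologicalSpace X]
    [CompactSpace X] [T2Space X]
    (C₁ C₂ : Set (Capacity X)) (h₁ : InConvexU C₁) (h₂ : InConvexU C₂)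
    (hdisj : C₁ ∩ C₂ = ∅) :
    ∃ S₁ S₂ : Set (Capacity X), InConvexU S₁ ∧ InConvexU S₂ ∧
      S₁ ∪ S₂ = {ν : Capacity X | IsPossibility ν} ∧ C₁ ∩ S₂ = ∅ ∧ C₂ ∩ S₁ = ∅ := by
  rcases h₁ with rfl | ⟨h1ne, h1cl, h1poss, h1eq⟩
  · exact ⟨∅, _, .inl rfl, inConvexU_setOf_isPossibility, empty_union _, empty_inter _,
      inter_empty _⟩
  rcases h₂ with rfl | ⟨h2ne, h2cl, h2poss, h2eq⟩
  · exact ⟨_, ∅, inConvexU_setOf_isPossibility, .inl rfl, union_empty _, inter_empty _,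
      empty_inter _⟩
  have h1int : possInterval C₁ ⊆ C₁ := h1eq.symm.subset
  have h2int : possInterval C₂ ⊆ C₂ := h2eq.symm.subset
  obtain ⟨σ₁, hσ₁⟩ := exists_isGreatest h1ne h1cl h1poss h1int
  obtain ⟨σ₂, hσ₂⟩ := exists_isGreatest h2ne h2cl h2poss h2int
  by_cases hsep₁ : ∃ F, supVal C₁ F < infVal C₂ F
  · obtain ⟨F, hF⟩ := hsep₁
    exact exists_separation_of_supVal_lt_infVal hσ₁ h1poss h2ne h2poss hF
  by_cases hsep₂ : ∃ F, supVal C₂ F < infVal C₁ F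
  · obtain ⟨F, hF⟩ := hsep₂
    obtain ⟨S₂, S₁, hS₂, hS₁, hS, hC₂, hC₁⟩ :=
      exists_separation_of_supVal_lt_infVal hσ₂ h2poss h1ne h1poss hF
    exact ⟨S₁, S₂, hS₁, hS₂, union_comm S₁ S₂ ▸ hS, hC₁, hC₂⟩
  simp only [not_exists, not_lt] at hsep₁ hsep₂
  exact absurd hdisj (inter_nonempty_of_forall_infVal_le_supVal hσ₁ hσ₂ h1poss h1int h2poss h2int
    hsep₂ hsep₁).ne_empty
end
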